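/- Let M be a countable structure satisfying Hypothesis (H) and G = Aut(M). Then the collection of open subgroups of G (in the topology of pointwise convergence) coincides with GS(M), the collection of generalized pointwise stabilizers G_(K,L) for K finite Galois-algebraically closed and L ≤ Aut(K). -/

import Mathlib

open FirstOrder

namespace Paper

variable (L : FirstOrder.Language) (M : Type*) [L.Structure M]

/-- The group of automorphisms of a first-order structure, with composition. -/
instance autGroup : Group (M ≃[L] M) where
  one := FirstOrder.Language.Equiv.refl L M
  mul f g := f.comp g
  inv := FirstOrder.Language.Equiv.symm
  mul_assoc _ _ _ := rfl
  one_mul f := FirstOrder.Language.Equiv.ext fun a => by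
    show (FirstOrder.Language.Equiv.refl L M).comp f a = f a; simp
  mul_one f := FirstOrder.Language.Equiv.ext fun a => by
    show f.comp (FirstOrder.Language.Equiv.refl L M) a = f a; simp
  inv_mul_cancel f := FirstOrder.Language.Equiv.ext fun a => by
    show f.symm.comp f a = FirstOrder.Language.Equiv.refl L M a; simp

@[simp] theorem aut_one_apply (a : M) : (1 : M ≃[L] M) a = a := by
  show FirstOrder.Language.Equiv.refl L M a = a; simp
@[simp] theorem aut_mul_apply (f g : M ≃[L] M) (a : M) : (f * g) a = f (g a) := rfl
@[simp] theorem aut_inv_apply (f : M ≃[L] M) (a : M) : f⁻¹ a = f.symm a := rfl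
@[simp] theorem aut_coe_mul (f g : M ≃[L] M) : ⇑(f * g) = ⇑f ∘ ⇑g := rfl

/-- The natural action of the automorphism group on the structure. -/
instance autAction : MulAction (M ≃[L] M) M where
  smul f a := f a
  one_smul _ := rfl
  mul_smul _ _ _ := rfl

@[simp] theorem aut_smul_def (f : M ≃[L] M) (a : M) : f • a = f a := rfl

/-- The topology of pointwise convergence on the automorphism group (the domain
being regarded as discrete). -/
instance autTopology : TopologicalSpace (M ≃[L] M) :=
  letI : TopologicalSpace M := ⊥
  TopologicalSpace.induced (fun g => (g : M → M)) Pi.topologicalSpace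

/-- The pointwise stabilizer `G_(A)` of a set `A ⊆ M` in `Aut(M)`. -/
def pstab (A : Set M) : Subgroup (M ≃[L] M) where
  carrier := {g | ∀ a ∈ A, g a = a}
  one_mem' := fun _ _ => rfl
  mul_mem' := by
    intro f g hf hg a ha
    simp only [Set.mem_setOf_eq] at *
    rw [aut_mul_apply, hg a ha, hf a ha]
  inv_mem' := by
    intro f hf a ha
    simp only [Set.mem_setOf_eq] at *
    rw [aut_inv_apply]
    conv_lhs => rw [← hf a ha]
    exact f.symm_apply_apply a

/-- The setwise stabilizer `G_{A}` of a set `A ⊆ M` in `Aut(M)`. -/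
def sstab (A : Set M) : Subgroup (M ≃[L] M) where
  carrier := {g | g '' A = A}
  one_mem' := by
    simp only [Set.mem_setOf_eq]
    ext a; simp [Set.mem_image]
  mul_mem' := by
    intro f g hf hg
    simp only [Set.mem_setOf_eq] at *
    rw [aut_coe_mul, Set.image_comp, hg, hf]
  inv_mem' := by
    intro f hf
    simp only [Set.mem_setOf_eq] at *
    conv_lhs => rw [← hf]
    rw [Set.image_image]
    ext a; constructor
    · rintro ⟨x, hx, rfl⟩
      simpa [f.symm_apply_apply] using hx
    · intro ha
      exact ⟨a, ha, f.symm_apply_apply a⟩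

/-- The Galois-algebraic closure of `A ⊆ M`: the set of elements with finite orbit
under the pointwise stabilizer of `A`. -/
def aclg (A : Set M) : Set M :=
  {b | (MulAction.orbit (pstab L M A) b).Finite}

/-- The Galois-definable closure of the empty set: elements fixed by every automorphism. -/
def dclg0 : Set M := {b | ∀ g : M ≃[L] M, g b = b}

/-- `p : K ≃ K'` is an isomorphism between the induced substructures on `K` and `K'`. -/
def IsPartialIso (K K' : Set M) (p : K ≃ K') : Prop :=
  (∀ {n : ℕ} (f : L.Functions n) (x : Fin n → K),
      ∃ h : FirstOrder.Language.Structure.funMap f (fun i => (x i : M)) ∈ K,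
        (p ⟨FirstOrder.Language.Structure.funMap f (fun i => (x i : M)), h⟩ : M) =
          FirstOrder.Language.Structure.funMap f (fun i => (p (x i) : M))) ∧
  (∀ {n : ℕ} (r : L.Relations n) (x : Fin n → K),
      FirstOrder.Language.Structure.RelMap r (fun i => (x i : M)) ↔
        FirstOrder.Language.Structure.RelMap r (fun i => (p (x i) : M)))

/-- `A(M)`: the collection of Galois-algebraic closures of finite subsets of `M`. -/
def AA : Set (Set M) := {K | ∃ A : Set M, A.Finite ∧ K = aclg L M A}

/-- Hypothesis (H). -/
structure HypH : Prop where
  countable : Countable M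
  locallyFinite : ∀ A : Set M, A.Finite → (aclg L M A).Finite
  extendsIso : ∀ (K K' : Set M), K.Finite → K'.Finite →
    aclg L M K = K → aclg L M K' = K' → ∀ p : K ≃ K', IsPartialIso L M K K' p →
      ∃ g : M ≃[L] M, ∀ a : K, g a = (p a : M)
  openSandwich : ∀ H : Subgroup (M ≃[L] M), IsOpen (H : Set (M ≃[L] M)) →
    ∃! K : Set M, K.Finite ∧ aclg L M K = K ∧ pstab L M K ≤ H ∧ H ≤ sstab L M K


/-- Generalized pointwise stabilizer `G_(K,L)`. -/
def genStab (K : Set M) (Lsub : Subgroup (Equiv.Perm K)) : Subgroup (M ≃[L] M) where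
  carrier := {f | ∃ p ∈ Lsub, ∀ a : K, f a = (p a : M)}
  one_mem' := ⟨1, Lsub.one_mem, fun a => by simp⟩
  mul_mem' := by
    rintro f g ⟨p, hp, hfp⟩ ⟨q, hq, hgq⟩
    refine ⟨p * q, Lsub.mul_mem hp hq, fun a => ?_⟩
    rw [aut_mul_apply, hgq a, hfp (q a)]
    rfl
  inv_mem' := by
    rintro f ⟨p, hp, hfp⟩
    refine ⟨p⁻¹, Lsub.inv_mem hp, fun a => ?_⟩
    have h1 : f ((p⁻¹ a : K) : M) = ((p (p⁻¹ a) : K) : M) := hfp _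
    rw [show p (p⁻¹ a) = a from Equiv.Perm.eq_inv_iff_eq.mp rfl] at h1
    rw [aut_inv_apply, ← h1, FirstOrder.Language.Equiv.symm_apply_apply]

/-- `GS(M)`: the collection of generalized pointwise stabilizers. -/
def GS : Set (Subgroup (M ≃[L] M)) :=
  {H | ∃ K ∈ AA L M, ∃ Lsub : Subgroup (Equiv.Perm K),
    (∀ p ∈ Lsub, IsPartialIso L M K K (p : K ≃ K)) ∧ H = genStab L M K Lsub}

/-- `PS(M)`: the collection of pointwise stabilizers of members of `A(M)`. -/
def PS : Set (Subgroup (M ≃[L] M)) := {H | ∃ K ∈ AA L M, H = pstab L M K}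

/-- The lattice `A₊(M)`. -/
def Aplus : Set (Set M) := AA L M ∪ {dclg0 L M}

/-- Covering relation in `S`. -/
def hasseCovers {α : Type*} (S : Set (Set α)) (A B : Set α) : Prop :=
  A ∈ S ∧ B ∈ S ∧ A ⊂ B ∧ ¬∃ C ∈ S, A ⊂ C ∧ C ⊂ B

/-- Adjacency in the Hasse diagram of `S`. -/
def hasseAdj {α : Type*} (S : Set (Set α)) (A B : Set α) : Prop :=
  hasseCovers S A B ∨ hasseCovers S B A

/-- `A_k(M)`: members of `A(M)` distinct from `dcl(∅)` at distance `≤ k` from the bottom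
of the lattice `A₊(M)` in its Hasse diagram. -/
def Ak (k : ℕ) : Set (Set M) :=
  {K | K ∈ AA L M ∧ K ≠ dclg0 L M ∧ ∃ (j : ℕ) (c : Fin (j + 1) → Set M), j ≤ k ∧
    c 0 = dclg0 L M ∧ c (Fin.last j) = K ∧
    ∀ i : Fin j, hasseAdj (Aplus L M) (c i.castSucc) (c i.succ)}

/-- `A_k(M)` for `k ≤ ω`, with `A_ω(M) = A(M)`. -/
def AkE (k : ℕ∞) : Set (Set M) :=
  match k with
  | ⊤ => AA L M
  | (k : ℕ) => Ak L M k

/-- `k_M`: the supremum of lengths of strict chains of Galois-algebraic closures of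
singletons. -/
noncomputable def kM : ℕ∞ :=
  ⨆ k ∈ {k : ℕ | ∃ a : Fin k → M, ∀ i j : Fin k, i < j → aclg L M {a i} ⊂ aclg L M {a j}},
    (k : ℕ∞)

/-- The domain of the expanded structure `E^ex_M(k)`: triples `(K, p, K')` with
`K, K' ∈ A_k(M)` and `p : K ≅ K'`. -/
structure ExTriple (k : ℕ∞) where
  K : Set M
  K' : Set M
  hK : K ∈ AkE L M k
  hK' : K' ∈ AkE L M k
  p : K ≃ K'
  iso : IsPartialIso L M K K' p

/-- The unary predicate of `E^ex_M(k)` holding of the identity triples. -/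
def IsIdTriple {k : ℕ∞} (t : ExTriple L M k) : Prop :=
  t.K = t.K' ∧ ∀ a : t.K, (t.p a : M) = (a : M)

/-- The `n`-ary relation `E_n` of `E^ex_M(k)`. -/
def ERel {k : ℕ∞} {n : ℕ} (x : Fin n → ExTriple L M k) : Prop :=
  ∃ g : M ≃[L] M, ∀ (i : Fin n) (a : (x i).K), g a = ((x i).p a : M)

/-- The binary relation `Dom` of `E^ex_M(k)`. -/
def DomRel {k : ℕ∞} (t s : ExTriple L M k) : Prop := IsIdTriple L M s ∧ s.K = t.K

/-- The binary relation `Cod` of `E^ex_M(k)`. -/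
def CodRel {k : ℕ∞} (t s : ExTriple L M k) : Prop := IsIdTriple L M s ∧ s.K = t.K'

variable {L M}

/-- A bijection between the domains of `E^ex_M(k)` and `E^ex_N(k)` is an isomorphism
if it preserves the identity-triple predicate, all the relations `E_n`, `Dom` and `Cod`. -/
def IsExIso {L' : FirstOrder.Language} {N : Type*} [L'.Structure N] {k : ℕ∞}
    (F : ExTriple L M k ≃ ExTriple L' N k) : Prop :=
  (∀ t, IsIdTriple L M t ↔ IsIdTriple L' N (F t)) ∧
  (∀ (n : ℕ) (x : Fin n → ExTriple L M k), ERel L M x ↔ ERel L' N (F ∘ x)) ∧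
  (∀ t s, DomRel L M t s ↔ DomRel L' N (F t) (F s)) ∧
  (∀ t s, CodRel L M t s ↔ CodRel L' N (F t) (F s))

variable (L M)

/-- The automorphism group of the expanded structure `E^ex_M(k)`. -/
def exAut (k : ℕ∞) : Subgroup (Equiv.Perm (ExTriple L M k)) where
  carrier := {σ | IsExIso (σ : ExTriple L M k ≃ ExTriple L M k)}
  one_mem' := by
    refine ⟨fun t => ?_, fun n x => ?_, fun t s => ?_, fun t s => ?_⟩ <;>
      simp [Equiv.Perm.coe_one, Function.comp_def]
  mul_mem' := by
    rintro σ τ ⟨hσ1, hσ2, hσ3, hσ4⟩ ⟨hτ1, hτ2, hτ3, hτ4⟩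
    refine ⟨fun t => ?_, fun n x => ?_, fun t s => ?_, fun t s => ?_⟩
    · exact (hτ1 t).trans (hσ1 (τ t))
    · exact (hτ2 n x).trans (hσ2 n (τ ∘ x))
    · exact (hτ3 t s).trans (hσ3 (τ t) (τ s))
    · exact (hτ4 t s).trans (hσ4 (τ t) (τ s))
  inv_mem' := by
    rintro σ ⟨hσ1, hσ2, hσ3, hσ4⟩
    refine ⟨fun t => ?_, fun n x => ?_, fun t s => ?_, fun t s => ?_⟩
    · have := hσ1 (σ⁻¹ t); simpa using this.symm
    · have := hσ2 n (⇑(σ⁻¹) ∘ x)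
      have hx : ⇑σ ∘ ⇑(σ⁻¹) ∘ x = x := by
        funext i; simp
      rw [hx] at this
      exact this.symm
    · have := hσ3 (σ⁻¹ t) (σ⁻¹ s); simpa using this.symm
    · have := hσ4 (σ⁻¹ t) (σ⁻¹ s); simpa using this.symm

/-- The subgroup of topological automorphisms of a topological group. -/
def topMulAut (G : Type*) [Group G] [TopologicalSpace G] : Subgroup (MulAut G) where
  carrier := {α | Continuous (α : G → G) ∧ Continuous (α.symm : G → G)}
  one_mem' := ⟨continuous_id, continuous_id⟩
  mul_mem' := by
    rintro α β ⟨hα1, hα2⟩ ⟨hβ1, hβ2⟩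
    exact ⟨hα1.comp hβ1, hβ2.comp hα2⟩
  inv_mem' := by
    rintro α ⟨h1, h2⟩
    exact ⟨h2, h1⟩

/-- A group isomorphism between topological groups which is a homeomorphism. -/
def IsTopIso {G H : Type*} [Group G] [Group H] [TopologicalSpace G] [TopologicalSpace H]
    (e : G ≃* H) : Prop :=
  Continuous (e : G → H) ∧ Continuous (e.symm : H → G)

/-- The natural homomorphism from `Aut(M)` to the symmetric group on `M`. -/
def toPerm : (M ≃[L] M) →* Equiv.Perm M where
  toFun g := g.toEquiv
  map_one' := rfl
  map_mul' f g := Equiv.ext fun _ => rfl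

/-- The orbit equivalence relation on `n`-tuples. -/
def orbRel (n : ℕ) (x y : Fin n → M) : Prop := ∃ g : M ≃[L] M, ∀ i, g (x i) = y i

/-- The automorphism group of the orbital structure `E_M`: permutations of `M`
preserving each orbit equivalence relation. -/
def autOrbital : Subgroup (Equiv.Perm M) where
  carrier := {f | ∀ (n : ℕ) (x y : Fin n → M),
    orbRel L M n x y ↔ orbRel L M n (f ∘ x) (f ∘ y)}
  one_mem' := by intro n x y; simp [Equiv.Perm.coe_one]
  mul_mem' := by
    intro f g hf hg n x y
    exact (hg n x y).trans (hf n (g ∘ x) (g ∘ y))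
  inv_mem' := by
    intro f hf n x y
    have := hf n (⇑(f⁻¹) ∘ x) (⇑(f⁻¹) ∘ y)
    have hx : ⇑f ∘ ⇑(f⁻¹) ∘ x = x := by funext i; simp
    have hy : ⇑f ∘ ⇑(f⁻¹) ∘ y = y := by funext i; simp
    rw [hx, hy] at this
    exact this.symm

/-- `Aut°(E_M)`: automorphisms of the orbital structure preserving each orbit
equivalence class. -/
def autOrbitalFix : Subgroup (Equiv.Perm M) where
  carrier := {f | f ∈ autOrbital L M ∧ ∀ (n : ℕ) (x : Fin n → M), orbRel L M n x (f ∘ x)}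
  one_mem' := ⟨(autOrbital L M).one_mem, fun n x => ⟨1, fun i => by simp [Equiv.Perm.coe_one]⟩⟩
  mul_mem' := by
    rintro f g ⟨hf, hf2⟩ ⟨hg, hg2⟩
    refine ⟨(autOrbital L M).mul_mem hf hg, fun n x => ?_⟩
    obtain ⟨a, ha⟩ := hg2 n x
    obtain ⟨b, hb⟩ := hf2 n (g ∘ x)
    exact ⟨b * a, fun i => by rw [aut_mul_apply, ha i, hb i]; rfl⟩
  inv_mem' := by
    rintro f ⟨hf, hf2⟩
    refine ⟨(autOrbital L M).inv_mem hf, fun n x => ?_⟩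
    obtain ⟨a, ha⟩ := hf2 n (⇑(f⁻¹) ∘ x)
    refine ⟨a⁻¹, fun i => ?_⟩
    have hi := ha i
    simp only [Function.comp_apply,
      (fun y : M => Equiv.Perm.eq_inv_iff_eq.mp rfl : ∀ y : M, f (f⁻¹ y) = y)] at hi
    rw [← hi, aut_inv_apply, FirstOrder.Language.Equiv.symm_apply_apply]
    rfl

/-- A homogeneous structure: isomorphisms between finite substructures extend to
automorphisms. -/
def Homogeneous : Prop :=
  ∀ (K K' : Set M), K.Finite → K'.Finite → ∀ p : K ≃ K',
    IsPartialIso L M K K' p → ∃ g : M ≃[L] M, ∀ a : K, g a = (p a : M)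

/-- Weak elimination of imaginaries, phrased group-theoretically: every open subgroup is
sandwiched between the pointwise and setwise stabilizers of a unique smallest finite
Galois-algebraically closed set. -/
def HasWEI : Prop :=
  ∀ H : Subgroup (M ≃[L] M), IsOpen (H : Set (M ≃[L] M)) →
    ∃ K : Set M, (K.Finite ∧ aclg L M K = K ∧ pstab L M K ≤ H ∧ H ≤ sstab L M K) ∧
      ∀ K' : Set M, (K'.Finite ∧ aclg L M K' = K' ∧ pstab L M K' ≤ H ∧ H ≤ sstab L M K') →
        K ⊆ K'

/-- No algebraicity: every finite set is Galois-algebraically closed. -/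
def NoAlgebraicity : Prop := ∀ A : Set M, A.Finite → aclg L M A = A

/-- The small index property: every subgroup of index `< 2^ℵ₀` is open. -/
def SIP : Prop :=
  ∀ H : Subgroup (M ≃[L] M), Cardinal.mk ((M ≃[L] M) ⧸ H) < Cardinal.continuum →
    IsOpen (H : Set (M ≃[L] M))

/-- An oligomorphic action: finitely many orbits on `n`-tuples for every `n`. -/
def Oligo (G : Type*) [Group G] (X : Type*) [MulAction G X] : Prop :=
  ∀ n : ℕ, Finite (MulAction.orbitRel.Quotient G (Fin n → X))

end Paper

namespace Paper

/-- ω-categoricity: `M` is, up to isomorphism, the unique countable model of its complete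
first-order theory. -/
def IsOmegaCategorical (L : FirstOrder.Language) (M : Type w) [L.Structure M] : Prop :=
  Countable M ∧ ∀ (N : Type w) (iN : L.Structure N), Countable N → Nonempty N →
    (@FirstOrder.Language.Theory.Model L N iN (L.completeTheory M)) →
      Nonempty (@FirstOrder.Language.Equiv L N M iN _)


/-!
An open subgroup `H` is sandwiched as `G_(K) ≤ H ≤ G_{K}` for a finite Galois-algebraically
closed `K`. Since `H` contains `G_(K)`, membership in `H` only depends on the restriction to `K`,
and since `H` stabilizes `K`, these restrictions form a group `L` of permutations of `K`; they are
partial automorphisms because a Galois-algebraically closed set is closed under the functions of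
the language. Hence `H = G_(K,L)`. Conversely `G_(K,L)` contains `G_(K)`, which is open because
`K = acl^g(A)` is finite for finite `A`.
-/

section OpenSubgroups

open FirstOrder.Language.Structure

variable {L : FirstOrder.Language} {M : Type*} [L.Structure M]

theorem isOpen_setOf_forall_apply_eq {K : Set M} (hK : K.Finite) (f : M ≃[L] M) :
    IsOpen {g : M ≃[L] M | ∀ a ∈ K, g a = f a} := by
  let : TopologicalSpace M := ⊥
  have : DiscreteTopology M := ⟨rfl⟩
  have hopen : IsOpen (⋂ a ∈ K, (fun u : M → M => u a) ⁻¹' {f a}) :=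
    hK.isOpen_biInter fun a _ => (isOpen_discrete {f a}).preimage (continuous_apply a)
  have hset : {g : M ≃[L] M | ∀ a ∈ K, g a = f a} =
      (fun g : M ≃[L] M => (g : M → M)) ⁻¹' ⋂ a ∈ K, (fun u : M → M => u a) ⁻¹' {f a} := by
    ext g
    simp
  rw [hset]
  exact isOpen_induced hopen

theorem isOpen_of_pstab_le {K : Set M} (hK : K.Finite) {H : Subgroup (M ≃[L] M)}
    (hH : pstab L M K ≤ H) : IsOpen (H : Set (M ≃[L] M)) := by
  refine isOpen_iff_forall_mem_open.mpr fun f hf => ⟨_, ?_, isOpen_setOf_forall_apply_eq hK f,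
    fun a _ => rfl⟩
  intro g hg
  have hfg : f⁻¹ * g ∈ H := hH fun a ha => by
    rw [aut_mul_apply, hg a ha, aut_inv_apply, FirstOrder.Language.Equiv.symm_apply_apply]
  simpa using H.mul_mem hf hfg

theorem pstab_le_genStab (K : Set M) (Lsub : Subgroup (Equiv.Perm K)) :
    pstab L M K ≤ genStab L M K Lsub :=
  fun _ hg => ⟨1, Lsub.one_mem, fun a => hg a a.2⟩

theorem funMap_mem_aclg (A : Set M) {n : ℕ} (F : L.Functions n) {x : Fin n → M}
    (hx : ∀ i, x i ∈ A) : funMap F x ∈ aclg L M A := by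
  refine (Set.finite_singleton (funMap F x)).subset ?_
  rintro _ ⟨⟨g, hg⟩, rfl⟩
  show g (funMap F x) = funMap F x
  rw [FirstOrder.Language.Equiv.map_fun]
  exact congrArg _ (funext fun i => hg (x i) (hx i))

theorem isPartialIso_of_apply_eq {K K' : Set M}
    (hK : ∀ {n : ℕ} (F : L.Functions n) (x : Fin n → K), funMap F (fun i => (x i : M)) ∈ K)
    (g : M ≃[L] M) (p : K ≃ K') (hgp : ∀ a : K, g a = p a) : IsPartialIso L M K K' p := by
  have hcomp {n : ℕ} (x : Fin n → K) : (fun i => (p (x i) : M)) = g ∘ fun i => (x i : M) :=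
    funext fun i => (hgp (x i)).symm
  refine ⟨fun F x => ⟨hK F x, ?_⟩, fun r x => ?_⟩
  · rw [← hgp, hcomp, FirstOrder.Language.Equiv.map_fun]
  · rw [hcomp, FirstOrder.Language.Equiv.map_rel]

def restrictionSubgroup (H : Subgroup (M ≃[L] M)) (K : Set M) : Subgroup (Equiv.Perm K) where
  carrier := {p | ∃ f ∈ H, ∀ a : K, f a = p a}
  one_mem' := ⟨1, H.one_mem, fun a => by simp⟩
  mul_mem' := by
    rintro p q ⟨f, hf, hfp⟩ ⟨g, hg, hgq⟩
    exact ⟨f * g, H.mul_mem hf hg, fun a => by rw [aut_mul_apply, hgq a, hfp (q a)]; rfl⟩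
  inv_mem' := by
    rintro p ⟨f, hf, hfp⟩
    refine ⟨f⁻¹, H.inv_mem hf, fun a => ?_⟩
    apply f.injective
    rw [aut_inv_apply, FirstOrder.Language.Equiv.apply_symm_apply, hfp]
    simp

theorem genStab_restrictionSubgroup {K : Set M} {H : Subgroup (M ≃[L] M)}
    (hpst : pstab L M K ≤ H) (hsst : H ≤ sstab L M K) :
    genStab L M K (restrictionSubgroup H K) = H := by
  ext f
  constructor
  · rintro ⟨p, ⟨g, hg, hgp⟩, hfp⟩
    have hgf : g⁻¹ * f ∈ H := hpst fun a ha => by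
      rw [aut_mul_apply, hfp ⟨a, ha⟩, ← hgp ⟨a, ha⟩, aut_inv_apply,
        FirstOrder.Language.Equiv.symm_apply_apply]
    simpa using H.mul_mem hg hgf
  · intro hf
    have hfK : ∀ x, f x ∈ K ↔ x ∈ K := fun x => by
      conv_lhs => rw [← (hsst hf : ⇑f '' K = K)]
      exact f.injective.mem_set_image
    exact ⟨Equiv.Perm.subtypePerm f.toEquiv hfK, ⟨f, hf, fun _ => rfl⟩, fun _ => rfl⟩

end OpenSubgroups

/-- Under Hypothesis (H), the open subgroups of `Aut(M)` are exactly the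
generalized pointwise stabilizers. -/
theorem stmt_8 (L : FirstOrder.Language) (M : Type*) [L.Structure M] (h : HypH L M) :
    {H : Subgroup (M ≃[L] M) | IsOpen (H : Set (M ≃[L] M))} = GS L M := by
  ext H
  constructor
  · intro hH
    obtain ⟨K, hKfin, hKacl, hpst, hsst⟩ := (h.openSandwich H hH).exists
    refine ⟨K, ⟨K, hKfin, hKacl.symm⟩, restrictionSubgroup H K, ?_,
      (genStab_restrictionSubgroup hpst hsst).symm⟩
    rintro p ⟨f, -, hfp⟩
    exact isPartialIso_of_apply_eq
      (fun F x => hKacl.subset (funMap_mem_aclg K F fun i => (x i).2)) f p hfp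
  · rintro ⟨K, ⟨A, hA, rfl⟩, Lsub, -, rfl⟩
    exact isOpen_of_pstab_le (h.locallyFinite A hA) (pstab_le_genStab _ Lsub)

end Paper
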